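/- Let D be a triangulated category with a t-structure with heart H, and suppose s ∈ H is such that every object of H admits a finite filtration in H with quotients in add(s) (summands of finite coproducts of s). Then the global dimension of D relative to H equals pd_H(s), which equals min{ n ≥ 0 : Hom_D(s, s[m]) = 0 for all m > n }. -/
import Mathlib


open CategoryTheory CategoryTheory.Limits CategoryTheory.Pretriangulated

universe v u

namespace PaperGD

variable {C : Type u} [Category.{v} C] [Preadditive C] [HasZeroObject C] [HasShift C ℤ]
  [∀ n : ℤ, (CategoryTheory.shiftFunctor C n).Additive] [Pretriangulated C]

/-- `Hom_T(x,y) = 0`. -/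
def HomZero (x y : C) : Prop := ∀ f : x ⟶ y, f = 0

/-- `pd_H w ≤ n` : vanishing of `Hom(w, h[m])` for all `h ∈ H`, `m > n`. -/
def pdLE (H : Set C) (w : C) (n : ℤ) : Prop :=
  ∀ h ∈ H, ∀ m : ℤ, n < m → HomZero w (h⟦m⟧)

/-- `gd_H T ≤ n`. -/
def gdLE (H : Set C) (n : ℤ) : Prop := ∀ x ∈ H, pdLE H x n

/-- canonical map `⨁ᵢ Hom(M, f i) → Hom(M, ∐ f)`. -/
noncomputable def coprodHom (M : C) {ι : Type v} [DecidableEq ι] (f : ι → C)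
    [HasCoproduct f] : DirectSum ι (fun i => (M ⟶ f i)) →+ (M ⟶ ∐ f) :=
  DirectSum.toAddMonoid fun i =>
    AddMonoidHom.mk' (fun g => g ≫ Sigma.ι f i) (fun _ _ => by simp [Preadditive.add_comp])

/-- compactness: `Hom(M,-)` commutes with coproducts. -/
def IsCompactObj (M : C) : Prop :=
  ∀ (ι : Type v) (f : ι → C) [DecidableEq ι] [HasCoproduct f],
    Function.Bijective (coprodHom M f)

/-- the smallest thick subcategory containing `M`. -/
inductive ThickOf (M : C) : C → Prop
  | base : ThickOf M M
  | zero (x : C) : Limits.IsZero x → ThickOf M x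
  | shift (x : C) (n : ℤ) : ThickOf M x → ThickOf M (x⟦n⟧)
  | ext (T : Triangle C) : (T ∈ distTriang C) → ThickOf M T.obj₁ → ThickOf M T.obj₂ →
      ThickOf M T.obj₃
  | retract (x y : C) (i : y ⟶ x) (p : x ⟶ y) : i ≫ p = 𝟙 y → ThickOf M x → ThickOf M y

/-- `M` is a compact silting object: compact, no positive self-extensions, and it
generates the compacts as a thick subcategory. -/
structure IsCompactSilting (M : C) : Prop where
  compact : IsCompactObj M
  orth : ∀ n : ℤ, 0 < n → HomZero M (M⟦n⟧)
  thick_eq : ∀ x : C, ThickOf M x ↔ IsCompactObj x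

/-- the heart `M^{⊥_{≠0}}` of the silting t-structure. -/
def siltHeart (M : C) : Set C := {y | ∀ n : ℤ, n ≠ 0 → HomZero M (y⟦n⟧)}

/-- the aisle `M^{⊥_{>0}}`. -/
def siltAisle (M : C) : Set C := {y | ∀ n : ℤ, 0 < n → HomZero M (y⟦n⟧)}

/-- the coaisle `M^{⊥_{≤0}}`. -/
def siltCoaisle (M : C) : Set C := {y | ∀ n : ℤ, n ≤ 0 → HomZero M (y⟦n⟧)}

/-- `T` is compactly generated. -/
def CompactlyGenerated (C : Type u) [Category.{v} C] [Preadditive C] [HasZeroObject C]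
    [HasShift C ℤ] [∀ n : ℤ, (CategoryTheory.shiftFunctor C n).Additive] [Pretriangulated C] :
    Prop :=
  ∀ y : C, (∀ x : C, IsCompactObj x → ∀ n : ℤ, HomZero x (y⟦n⟧)) → Limits.IsZero y

/-- bounded objects `T^b = (T^c)^⋇`. -/
def Bounded (t : C) : Prop :=
  ∀ x : C, IsCompactObj x → ∃ N : ℕ, ∀ n : ℤ, (N : ℤ) ≤ |n| → HomZero x (t⟦n⟧)

/-- `x ∈ Add s` : summand of a coproduct of copies of `s`. -/
def InAdd (s x : C) : Prop :=
  ∃ (ι : Type v) (_ : HasCoproduct (fun _ : ι => s)) (i : x ⟶ ∐ (fun _ : ι => s))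
    (p : (∐ (fun _ : ι => s)) ⟶ x), i ≫ p = 𝟙 x

/-- `x ∈ add s` : summand of a finite coproduct of copies of `s`. -/
def InAddFin (s x : C) : Prop :=
  ∃ (n : ℕ) (_ : HasCoproduct (fun _ : Fin n => s)) (i : x ⟶ ∐ (fun _ : Fin n => s))
    (p : (∐ (fun _ : Fin n => s)) ⟶ x), i ≫ p = 𝟙 x

/-- finite filtrations (in the heart `H`) with quotients satisfying `P`,
encoded by triangles `s₁ → x → x₁ → s₁[1]`. -/
inductive FiltBy (H : Set C) (P : C → Prop) : ℕ → C → Prop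
  | zero (x : C) : P x → FiltBy H P 0 x
  | succ (n : ℕ) (T : Triangle C) : (T ∈ distTriang C) → P T.obj₁ → T.obj₃ ∈ H →
      FiltBy H P n T.obj₃ → FiltBy H P (n + 1) T.obj₂

/-- the class `Add M ∗ Add M[1] ∗ ⋯ ∗ Add M[d]`. -/
inductive AddStar (M : C) : ℕ → C → Prop
  | zero (x : C) : InAdd M x → AddStar M 0 x
  | succ (d : ℕ) (T : Triangle C) (w : C) : (T ∈ distTriang C) → InAdd M T.obj₁ →
      AddStar M d w → Nonempty (T.obj₃ ≅ w⟦(1 : ℤ)⟧) → AddStar M (d + 1) T.obj₂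

/-- `Hom_T(x,-)` restricted to `H` commutes with coproducts. -/
def HomPreservesCoprodsOn (H : Set C) (x : C) : Prop :=
  ∀ (ι : Type v) (h : ι → C) [DecidableEq ι] [HasCoproduct h],
    (∀ i, h i ∈ H) → Function.Bijective (coprodHom x h)

/-- a t-structure `(U,V)` (as a torsion pair with `U[1] ⊆ U`). -/
structure TStruct (C : Type u) [Category.{v} C] [Preadditive C] [HasZeroObject C]
    [HasShift C ℤ] [∀ n : ℤ, (CategoryTheory.shiftFunctor C n).Additive] [Pretriangulated C] where
  U : Set C
  V : Set C
  U_eq : U = {x | ∀ v ∈ V, HomZero x v}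
  V_eq : V = {y | ∀ u ∈ U, HomZero u y}
  decomp : ∀ x : C, ∃ (u v : C) (f : u ⟶ x) (g : x ⟶ v) (h : v ⟶ u⟦(1 : ℤ)⟧),
      (Triangle.mk f g h ∈ distTriang C) ∧ u ∈ U ∧ v ∈ V
  shift_le : ∀ u ∈ U, u⟦(1 : ℤ)⟧ ∈ U

/-- the heart `H = U ∩ V[1]` of a t-structure. -/
def TStruct.heart (t : TStruct C) : Set C := {x | x ∈ t.U ∧ x⟦(-1 : ℤ)⟧ ∈ t.V}


section Aux

/-- source-side closure of `pdLE` under retracts of finite coproducts of `s`. -/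
lemma pdLE_of_addFin {H : Set C} {s x : C} (hx : InAddFin s x) {n : ℤ}
    (hs : pdLE H s n) : pdLE H x n := by
  obtain ⟨k, hc, i, p, hip⟩ := hx
  intro h hh m hm f
  have hp : p ≫ f = 0 := by
    apply colimit.hom_ext
    intro j
    simpa using hs h hh m hm (Sigma.ι (fun _ : Fin k => s) j.as ≫ p ≫ f)
  calc f = (i ≫ p) ≫ f := by rw [hip, Category.id_comp]
    _ = i ≫ (p ≫ f) := by rw [Category.assoc]
    _ = 0 := by rw [hp, Limits.comp_zero]

/-- source-side closure of `pdLE` under extensions. -/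
lemma pdLE_ext {H : Set C} {n : ℤ} (T : Triangle C) (hT : T ∈ distTriang C)
    (h1 : pdLE H T.obj₁ n) (h3 : pdLE H T.obj₃ n) : pdLE H T.obj₂ n := by
  intro h hh m hm f
  obtain ⟨g, hg⟩ := Triangle.yoneda_exact₂ T hT f (h1 h hh m hm (T.mor₁ ≫ f))
  rw [hg, h3 h hh m hm g, Limits.comp_zero]

lemma pdLE_of_filt {H : Set C} {s : C} {n : ℤ} (hs : pdLE H s n) {k : ℕ} {x : C}
    (hx : FiltBy H (InAddFin s) k x) : pdLE H x n := by
  induction hx with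
  | zero x hx => exact pdLE_of_addFin hx hs
  | succ k T hT h1 _ _ ih => exact pdLE_ext T hT (pdLE_of_addFin h1 hs) ih

/-- target-side: vanishing of `Hom(s, x⟦m⟧)` for `x ∈ add s`. -/
lemma homZero_shift_addFin {s x : C} (hx : InAddFin s x) (m : ℤ)
    (hs : HomZero s (s⟦m⟧)) : HomZero s (x⟦m⟧) := by
  obtain ⟨k, hc, i, p, hip⟩ := hx
  haveI : HasBiproduct (fun _ : Fin k => s) := HasBiproduct.of_hasCoproduct _
  intro f
  have hQ : HomZero s (((∐ fun _ : Fin k => s) : C)⟦m⟧) := by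
    intro g
    let e : (⨁ fun _ : Fin k => s) ≅ (∐ fun _ : Fin k => s) := biproduct.isoCoproduct _
    let b := (shiftFunctor C m).mapBiproduct (fun _ : Fin k => s)
    have hzero : (g ≫ (e.inv)⟦m⟧') ≫ b.hom = 0 := by
      apply biproduct.hom_ext
      intro j
      simpa using hs (((g ≫ (e.inv)⟦m⟧') ≫ b.hom) ≫ biproduct.π _ j)
    have : g = ((g ≫ (e.inv)⟦m⟧') ≫ b.hom) ≫ b.inv ≫ (e.hom)⟦m⟧' := by
      simp [← Functor.map_comp]
    rw [this, hzero, Limits.zero_comp]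
  have : f = (f ≫ i⟦m⟧') ≫ p⟦m⟧' := by
    rw [Category.assoc, ← Functor.map_comp, hip]; simp
  rw [this, hQ (f ≫ i⟦m⟧'), Limits.zero_comp]

/-- target-side closure of `HomZero w -` under extensions. -/
lemma homZero_ext₂ (T : Triangle C) (hT : T ∈ distTriang C) {w : C}
    (h1 : HomZero w T.obj₁) (h3 : HomZero w T.obj₃) : HomZero w T.obj₂ := by
  intro f
  obtain ⟨g, hg⟩ := Triangle.coyoneda_exact₂ T hT f (h3 (f ≫ T.mor₂))
  rw [hg, h1 g, Limits.zero_comp]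

lemma homZero_shift_of_filt {H : Set C} {s : C} {n : ℤ}
    (hsext : ∀ m : ℤ, n < m → HomZero s (s⟦m⟧)) {k : ℕ} {x : C}
    (hx : FiltBy H (InAddFin s) k x) : ∀ m : ℤ, n < m → HomZero s (x⟦m⟧) := by
  induction hx with
  | zero x hx => exact fun m hm => homZero_shift_addFin hx m (hsext m hm)
  | succ k T hT h1 _ _ ih =>
    intro m hm
    have hT' := Triangle.shift_distinguished T hT m
    exact homZero_ext₂ _ hT' (homZero_shift_addFin h1 m (hsext m hm)) (ih m hm)

end Aux

/-- if every object of the heart is filtered with quotients in `add s`,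
then `gd_H D = pd_H s = min{ n ≥ 0 : Hom(s, s[m]) = 0 for m > n }`
(each equality stated as equality of the sets of upper bounds). -/
theorem gd_eq_pd_eq_selfext (t : TStruct C) (s : C) (hs : s ∈ t.heart)
    (filt : ∀ x ∈ t.heart, ∃ n : ℕ, FiltBy t.heart (InAddFin s) n x) :
    (∀ n : ℤ, gdLE t.heart n ↔ pdLE t.heart s n) ∧
    (∀ n : ℤ, 0 ≤ n →
      (pdLE t.heart s n ↔ ∀ m : ℤ, n < m → HomZero s (s⟦m⟧))) := by
  constructor
  · intro n
    constructor
    · intro hg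
      exact hg s hs
    · intro hp x hx
      obtain ⟨k, hk⟩ := filt x hx
      exact pdLE_of_filt hp hk
  · intro n _
    constructor
    · intro hp m hm
      exact hp s hs m hm
    · intro hext h hh m hm
      obtain ⟨k, hk⟩ := filt h hh
      exact homZero_shift_of_filt hext hk m hm

end PaperGD
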